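/- For each integer K ≥ 3 let ξ_K be the unique real number satisfying Φ(ξ_K)^K = (2 log K)^{−1}. Then as K → ∞: (i) ξ_K / √(2 log K) → 1, and (ii) K·φ(ξ_K) / ( ξ_K · log log K ) → 1. -/

import Mathlib

/-!
Write `Φ(ξ_K) = exp (-ε_K)` with `ε_K = log (2 log K) / K → 0`, so that the tail `1 - Φ(ξ_K)` is
asymptotic to `ε_K`. The Mills-ratio bounds `1 - Φ(x) ≤ φ(x)/x ≤ (1 + x⁻²) (1 - Φ(x))`, both read
off from `∫_x^∞ (1 + t⁻²) φ(t) dt = φ(x)/x`, turn this into `φ(ξ_K)/ξ_K ~ ε_K`. Multiplying by `K`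
gives (ii), because `log (2 log K) ~ log log K`; taking logarithms gives
`ξ_K² / 2 ~ -log ε_K ~ log K`, which is (i).
-/

open MeasureTheory ProbabilityTheory Filter

/-- The standard normal density. -/
noncomputable def stdNormalPDF (x : ℝ) : ℝ :=
    (Real.sqrt (2 * Real.pi))⁻¹ * Real.exp (-x ^ 2 / 2)

/-- The standard normal cumulative distribution function. -/
noncomputable def stdNormalCDF (x : ℝ) : ℝ :=
    (gaussianReal 0 1 (Set.Iic x)).toReal

open Set Real Asymptotics Topology

lemma stdNormalPDF_eq_gaussianPDFReal : stdNormalPDF = gaussianPDFReal 0 1 := by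
  ext x; simp [stdNormalPDF, gaussianPDFReal]

lemma stdNormalPDF_pos (x : ℝ) : 0 < stdNormalPDF x := by
  rw [stdNormalPDF_eq_gaussianPDFReal]; exact gaussianPDFReal_pos 0 1 x one_ne_zero

lemma one_sub_stdNormalCDF_eq_measureReal (x : ℝ) :
    1 - stdNormalCDF x = (gaussianReal 0 1).real (Ioi x) := by
  rw [stdNormalCDF, ← compl_Iic, measureReal_compl measurableSet_Iic, probReal_univ]; rfl

lemma one_sub_stdNormalCDF_eq_integral (x : ℝ) :
    1 - stdNormalCDF x = ∫ t in Ioi x, stdNormalPDF t := by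
  rw [one_sub_stdNormalCDF_eq_measureReal, measureReal_def,
    gaussianReal_apply_eq_integral 0 one_ne_zero, ENNReal.toReal_ofReal,
    stdNormalPDF_eq_gaussianPDFReal]
  exact setIntegral_nonneg measurableSet_Ioi fun t _ => gaussianPDFReal_nonneg 0 1 t

lemma stdNormalCDF_lt_one (x : ℝ) : stdNormalCDF x < 1 := by
  have hpos : 0 < (gaussianReal 0 1).real (Ioi x) :=
    ENNReal.toReal_pos ((gaussianReal_absolutelyContinuous' 0 one_ne_zero).pos_mono
      (by simp)).ne' (measure_ne_top _ _)
  linarith [one_sub_stdNormalCDF_eq_measureReal x]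

lemma stdNormalCDF_nonneg (x : ℝ) : 0 ≤ stdNormalCDF x := measureReal_nonneg

lemma stdNormalCDF_mono : Monotone stdNormalCDF := fun _ _ h =>
  measureReal_mono (Iic_subset_Iic.mpr h)

lemma hasDerivAt_stdNormalPDF (x : ℝ) :
    HasDerivAt stdNormalPDF (-x * stdNormalPDF x) x := by
  have h : HasDerivAt (fun t : ℝ => -t ^ 2 / 2) (-x) x :=
    ((hasDerivAt_pow 2 x).neg.div_const 2).congr_deriv (by ring)
  exact (h.exp.const_mul (√(2 * π))⁻¹).congr_deriv (by rw [stdNormalPDF]; ring)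

lemma tendsto_stdNormalPDF_atTop : Tendsto stdNormalPDF atTop (𝓝 0) := by
  have h : Tendsto (fun x : ℝ => -x ^ 2 / 2) atTop atBot :=
    (tendsto_neg_atTop_atBot.comp (tendsto_pow_atTop two_ne_zero)).atBot_div_const two_pos
  have := (tendsto_exp_atBot.comp h).const_mul (√(2 * π))⁻¹
  rw [mul_zero] at this
  exact this

lemma integrable_stdNormalPDF : Integrable stdNormalPDF := by
  rw [stdNormalPDF_eq_gaussianPDFReal]; exact integrable_gaussianPDFReal 0 1

section MillsRatio

variable {x : ℝ}

lemma hasDerivAt_neg_stdNormalPDF_div {t : ℝ} (ht : t ≠ 0) :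
    HasDerivAt (fun s => -(stdNormalPDF s / s)) ((1 + (t ^ 2)⁻¹) * stdNormalPDF t) t := by
  refine (((hasDerivAt_stdNormalPDF t).div (hasDerivAt_id t) ht).neg).congr_deriv ?_
  simp only [id]
  field_simp
  ring

lemma integrableOn_Ioi_one_add_inv_sq_mul_stdNormalPDF (hx : 0 < x) :
    IntegrableOn (fun t => (1 + (t ^ 2)⁻¹) * stdNormalPDF t) (Ioi x) :=
  integrableOn_Ioi_deriv_of_nonneg'
    (fun t ht => hasDerivAt_neg_stdNormalPDF_div (hx.trans_le ht).ne')
    (fun t _ => by have := stdNormalPDF_pos t; positivity)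
    (by simpa using (tendsto_stdNormalPDF_atTop.div_atTop tendsto_id).neg)

lemma integral_Ioi_one_add_inv_sq_mul_stdNormalPDF (hx : 0 < x) :
    ∫ t in Ioi x, (1 + (t ^ 2)⁻¹) * stdNormalPDF t = stdNormalPDF x / x := by
  rw [integral_Ioi_of_hasDerivAt_of_nonneg' (l := 0)
    (fun t ht => hasDerivAt_neg_stdNormalPDF_div (hx.trans_le ht).ne')
    (fun t _ => by have := stdNormalPDF_pos t; positivity)
    (by simpa using (tendsto_stdNormalPDF_atTop.div_atTop tendsto_id).neg)]
  ring

lemma one_sub_stdNormalCDF_le_stdNormalPDF_div (hx : 0 < x) :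
    1 - stdNormalCDF x ≤ stdNormalPDF x / x := by
  rw [one_sub_stdNormalCDF_eq_integral, ← integral_Ioi_one_add_inv_sq_mul_stdNormalPDF hx]
  refine setIntegral_mono_on integrable_stdNormalPDF.integrableOn
    (integrableOn_Ioi_one_add_inv_sq_mul_stdNormalPDF hx) measurableSet_Ioi fun t _ => ?_
  have := stdNormalPDF_pos t
  exact le_mul_of_one_le_left this.le (by simp [sq_nonneg])

lemma stdNormalPDF_div_le_one_add_inv_sq_mul (hx : 0 < x) :
    stdNormalPDF x / x ≤ (1 + (x ^ 2)⁻¹) * (1 - stdNormalCDF x) := by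
  rw [one_sub_stdNormalCDF_eq_integral, ← integral_Ioi_one_add_inv_sq_mul_stdNormalPDF hx,
    ← integral_const_mul]
  refine setIntegral_mono_on (integrableOn_Ioi_one_add_inv_sq_mul_stdNormalPDF hx)
    (integrable_stdNormalPDF.const_mul _).integrableOn measurableSet_Ioi fun t ht => ?_
  have := stdNormalPDF_pos t
  have : x < t := ht
  gcongr

end MillsRatio

theorem one_sub_stdNormalCDF_isEquivalent :
    (fun x => 1 - stdNormalCDF x) ~[atTop] fun x => stdNormalPDF x / x := by
  refine isEquivalent_of_tendsto_one ?_
  have hlow : Tendsto (fun x : ℝ => (1 + (x ^ 2)⁻¹)⁻¹) atTop (𝓝 1) := by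
    simpa using ((tendsto_inv_atTop_zero.comp (tendsto_pow_atTop two_ne_zero)).const_add
      (1 : ℝ)).inv₀ (by norm_num)
  refine tendsto_of_tendsto_of_tendsto_of_le_of_le' hlow tendsto_const_nhds ?_ ?_ <;>
    filter_upwards [eventually_gt_atTop 0] with x hx <;>
    have hpos : 0 < stdNormalPDF x / x := div_pos (stdNormalPDF_pos x) hx
  · rw [Pi.div_apply, le_div_iff₀ hpos, inv_mul_le_iff₀ (by positivity)]
    exact stdNormalPDF_div_le_one_add_inv_sq_mul hx
  · rw [Pi.div_apply, div_le_one hpos]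
    exact one_sub_stdNormalCDF_le_stdNormalPDF_div hx

lemma tendsto_atTop_of_tendsto_stdNormalCDF {α : Type*} {l : Filter α} {y : α → ℝ}
    (h : Tendsto (fun a => stdNormalCDF (y a)) l (𝓝 1)) : Tendsto y l atTop :=
  tendsto_atTop.2 fun M => (h.eventually (lt_mem_nhds (stdNormalCDF_lt_one M))).mono
    fun _ ha => (stdNormalCDF_mono.reflect_lt ha).le

lemma log_div_stdNormalPDF_isEquivalent :
    (fun x => log (x / stdNormalPDF x)) ~[atTop] fun x => x ^ 2 / 2 := by
  have hsq : (fun x : ℝ => x) =o[atTop] fun x => x ^ 2 / 2 := by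
    simpa [div_eq_mul_inv, mul_comm] using
      (isLittleO_pow_pow_atTop_of_lt (𝕜 := ℝ) one_lt_two).const_mul_right
        (c := (2 : ℝ)⁻¹) (by norm_num)
  have hsmall : (fun x => log x + log √(2 * π)) =o[atTop] fun x => x ^ 2 / 2 :=
    (isLittleO_log_id_atTop.add (isLittleO_const_id_atTop _)).trans hsq
  refine (IsEquivalent.refl.add_isLittleO hsmall).congr_left ?_
  filter_upwards [eventually_gt_atTop 0] with x hx
  rw [Pi.add_apply, log_div hx.ne' (stdNormalPDF_pos x).ne', stdNormalPDF,
    log_mul (by positivity) (exp_pos _).ne', log_inv, log_exp]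
  ring

lemma sq_div_two_isEquivalent_neg_log {α : Type*} {l : Filter α} {x ε : α → ℝ}
    (hx : Tendsto x l atTop) (hε : Tendsto ε l (𝓝[>] 0))
    (h : (fun a => stdNormalPDF (x a) / x a) ~[l] ε) :
    (fun a => x a ^ 2 / 2) ~[l] fun a => -log (ε a) := by
  have hlog := h.inv.log hε.inv_tendsto_nhdsGT_zero
  refine (log_div_stdNormalPDF_isEquivalent.comp_tendsto hx).symm.trans ?_
  simpa [Function.comp_def, log_inv] using hlog

lemma one_sub_exp_neg_isEquivalent : (fun t => 1 - exp (-t)) ~[𝓝 0] id := by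
  have h : HasDerivAt (fun t => 1 - exp (-t)) 1 0 :=
    ((hasDerivAt_neg 0).exp.const_sub 1).congr_deriv (by simp)
  have := h.isLittleO
  simp only [neg_zero, exp_zero, sub_self, sub_zero, smul_eq_mul, mul_one] at this
  exact this

lemma log_const_mul_isEquivalent {c : ℝ} (hc : 0 < c) :
    (fun x => log (c * x)) ~[atTop] log := by
  refine (IsEquivalent.refl.const_add_of_norm_tendsto_atTop (c := log c)
    (tendsto_norm_atTop_atTop.comp tendsto_log_atTop)).congr_left ?_
  filter_upwards [eventually_gt_atTop 0] with x hx
  rw [log_mul hc.ne' hx.ne']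

lemma log_log_isLittleO_log : (fun x => log (log x)) =o[atTop] log :=
  isLittleO_log_id_atTop.comp_tendsto tendsto_log_atTop

lemma log_two_mul_log_isLittleO_id : (fun x => log (2 * log x)) =o[atTop] id :=
  ((log_const_mul_isEquivalent two_pos).comp_tendsto tendsto_log_atTop).isBigO.trans_isLittleO
    (log_log_isLittleO_log.trans isLittleO_log_id_atTop)

lemma neg_log_log_two_mul_log_div_isEquivalent :
    (fun x => -log (log (2 * log x) / x)) ~[atTop] log := by
  have htop : Tendsto (fun x => log (2 * log x)) atTop atTop :=
    tendsto_log_atTop.comp (tendsto_log_atTop.const_mul_atTop two_pos)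
  have hsmall : (fun x => log (log (2 * log x))) =o[atTop] log :=
    (isLittleO_log_id_atTop.comp_tendsto htop).trans_isBigO
      ((log_const_mul_isEquivalent two_pos).comp_tendsto tendsto_log_atTop).isBigO
      |>.trans log_log_isLittleO_log
  refine (IsEquivalent.refl.sub_isLittleO hsmall).congr_left ?_
  filter_upwards [eventually_gt_atTop 0, htop.eventually_gt_atTop 0] with x hx hlog
  rw [Pi.sub_apply, log_div hlog.ne' hx.ne']
  ring

lemma eq_exp_log_div_of_pow_eq {p c : ℝ} {n : ℕ} (hp : 0 ≤ p) (hn : n ≠ 0) (hc : 0 < c)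
    (h : p ^ n = c) : p = exp (log c / n) := by
  rw [← pow_rpow_inv_natCast hp hn, h, rpow_def_of_pos hc, div_eq_mul_inv]

lemma tendsto_log_two_mul_log_div_nhdsGT_zero :
    Tendsto (fun K : ℕ => log (2 * log K) / K) atTop (𝓝[>] 0) := by
  refine tendsto_nhdsWithin_iff.2
    ⟨(log_two_mul_log_isLittleO_id.comp_tendsto tendsto_natCast_atTop_atTop).tendsto_div_nhds_zero,
      ?_⟩
  have htop : Tendsto (fun K : ℕ => log (2 * log K)) atTop atTop :=
    tendsto_log_atTop.comp
      ((tendsto_log_atTop.comp tendsto_natCast_atTop_atTop).const_mul_atTop two_pos)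
  filter_upwards [eventually_gt_atTop 0, htop.eventually_gt_atTop 0] with K hK h
  exact div_pos h (Nat.cast_pos.2 hK)

section QuantileAsymptotics

variable {ξ : ℕ → ℝ}

lemma tendsto_div_sqrt_two_mul_log (hξ : Tendsto ξ atTop atTop)
    (h : (fun K => stdNormalPDF (ξ K) / ξ K) ~[atTop] fun K : ℕ => log (2 * log K) / K) :
    Tendsto (fun K : ℕ => ξ K / √(2 * log K)) atTop (𝓝 1) := by
  have hsq := (sq_div_two_isEquivalent_neg_log hξ tendsto_log_two_mul_log_div_nhdsGT_zero h).trans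
    (neg_log_log_two_mul_log_div_isEquivalent.comp_tendsto tendsto_natCast_atTop_atTop)
  have hlog : ∀ᶠ K : ℕ in atTop, log K ≠ 0 :=
    (tendsto_log_atTop.comp tendsto_natCast_atTop_atTop).eventually_ne_atTop 0
  have hsqrt := ((isEquivalent_iff_tendsto_one hlog).mp hsq).sqrt
  rw [sqrt_one] at hsqrt
  refine hsqrt.congr' ?_
  filter_upwards [hξ.eventually_ge_atTop 0] with K hK
  rw [Pi.div_apply, div_div, sqrt_div' _ (by positivity), sqrt_sq hK]

lemma tendsto_mul_stdNormalPDF_div_mul_log_log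
    (h : (fun K => stdNormalPDF (ξ K) / ξ K) ~[atTop] fun K : ℕ => log (2 * log K) / K) :
    Tendsto (fun K : ℕ => K * stdNormalPDF (ξ K) / (ξ K * log (log K))) atTop (𝓝 1) := by
  have hlog := tendsto_log_atTop.comp tendsto_natCast_atTop_atTop
  have hK : ∀ᶠ K : ℕ in atTop, (K : ℝ) * (log (2 * log K) / K) = log (2 * log K) :=
    (eventually_ne_atTop 0).mono fun K hK => mul_div_cancel₀ _ (Nat.cast_ne_zero.2 hK)
  have hequiv : (fun K : ℕ => K * (stdNormalPDF (ξ K) / ξ K)) ~[atTop] fun K => log (log K) :=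
    ((IsEquivalent.refl.mul h).congr_right hK).trans
      ((log_const_mul_isEquivalent two_pos).comp_tendsto hlog)
  refine ((isEquivalent_iff_tendsto_one
    ((tendsto_log_atTop.comp hlog).eventually_ne_atTop 0)).mp hequiv).congr fun K => ?_
  simp only [Pi.div_apply, Function.comp_apply]
  ring

end QuantileAsymptotics

theorem stmt_7 (ξ : ℕ → ℝ)
    (hξ : ∀ K : ℕ, 3 ≤ K → (stdNormalCDF (ξ K)) ^ K = (2 * Real.log K)⁻¹) :
    Tendsto (fun K : ℕ => ξ K / Real.sqrt (2 * Real.log K)) atTop (nhds 1) ∧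
    Tendsto (fun K : ℕ => (K : ℝ) * stdNormalPDF (ξ K) / (ξ K * Real.log (Real.log K)))
      atTop (nhds 1) := by
  have hε := tendsto_nhds_of_tendsto_nhdsWithin tendsto_log_two_mul_log_div_nhdsGT_zero
  have hΦ : ∀ᶠ K : ℕ in atTop, stdNormalCDF (ξ K) = exp (-(log (2 * log K) / K)) := by
    filter_upwards [eventually_ge_atTop 3] with K hK
    have hlog : 0 < log K := log_pos (by norm_cast; omega)
    rw [eq_exp_log_div_of_pow_eq (stdNormalCDF_nonneg _) (by omega) (by positivity) (hξ K hK),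
      log_inv, neg_div]
  have hξ_top : Tendsto ξ atTop atTop := by
    refine tendsto_atTop_of_tendsto_stdNormalCDF (Tendsto.congr' (hΦ.mono fun K h => h.symm) ?_)
    simpa [Function.comp_def] using (continuous_exp.tendsto _).comp hε.neg
  have hkey : (fun K => stdNormalPDF (ξ K) / ξ K) ~[atTop] fun K : ℕ => log (2 * log K) / K :=
    (one_sub_stdNormalCDF_isEquivalent.comp_tendsto hξ_top).symm.trans
      ((one_sub_exp_neg_isEquivalent.comp_tendsto hε).congr_left (hΦ.mono fun K h => by simp [h]))
  exact ⟨tendsto_div_sqrt_two_mul_log hξ_top hkey, tendsto_mul_stdNormalPDF_div_mul_log_log hkey⟩
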